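/- arXiv:2206.12222 — 10 statements merged into one kernel-verified Lean document; each statement's English description precedes it below -/
import Mathlib

section
/- For any index i of a null-terminated string S, the Lyndon prefix of suffix S_i equals S[i..nss[i]), i.e., the longest prefix of S_i that is a Lyndon word is exactly the substring from i up to (but not including) the next smaller suffix position. -/
/-- Strict lexicographic order on strings over a totally ordered alphabet. -/
def Slt {α : Type*} [LinearOrder α] (u v : List α) : Prop := List.Lex (· < ·) u v

/-- `S` is null-terminated: its last character is strictly smaller than every other character. -/
def NullTerminated {α : Type*} [LinearOrder α] (S : List α) : Prop :=
  ∀ i, ∀ _h : i + 1 < S.length, S[S.length - 1]'(by omega) < S[i]'(by omega)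

/-- `nss S i` : position of the next smaller suffix of `i` (with `S.drop S.length = ε`). -/
noncomputable def nss {α : Type*} [LinearOrder α] (S : List α) (i : ℕ) : ℕ :=
  sInf { j | i < j ∧ j ≤ S.length ∧ Slt (S.drop j) (S.drop i) }

/-- `pss S i` : position of the previous smaller suffix of `i`, or `-1` if none exists. -/
noncomputable def pss {α : Type*} [LinearOrder α] (S : List α) (i : ℕ) : ℤ :=
  sSup (insert (-1) { j : ℤ | 0 ≤ j ∧ j < (i : ℤ) ∧ Slt (S.drop j.toNat) (S.drop i) })

/-- A non-empty string is a Lyndon word iff it is smaller than all of its proper suffixes. -/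
def IsLyndon {α : Type*} [LinearOrder α] (w : List α) : Prop :=
  w ≠ [] ∧ ∀ j, 0 < j → j < w.length → Slt w (w.drop j)

/-- `Ls S i` : the Lyndon prefix of the suffix `S.drop i`, which equals `S[i..nss[i])`. -/
noncomputable def Ls {α : Type*} [LinearOrder α] (S : List α) (i : ℕ) : List α :=
  (S.drop i).take (nss S i - i)

private lemma lex_cancel_left {α : Type*} [LinearOrder α] :
    ∀ (b u v : List α), List.Lex (· < ·) (b ++ u) (b ++ v) → List.Lex (· < ·) u v
  | [], _, _, h => h
  | x :: b, u, v, h => by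
    rw [List.cons_append, List.cons_append, List.lex_cons_iff] at h
    exact lex_cancel_left b u v h

private lemma lex_append_cases {α : Type*} [LinearOrder α] :
    ∀ (a b t : List α), List.Lex (· < ·) (a ++ t) (b ++ t) →
      List.Lex (· < ·) a b ∨ b <+: a
  | [], [], t, h => absurd h (irrefl_of _ t)
  | [], _ :: _, _, _ => Or.inl List.Lex.nil
  | _ :: _, [], _, _ => Or.inr List.nil_prefix
  | x :: a, y :: b, t, h => by
    rw [List.cons_append, List.cons_append] at h
    cases h with
    | cons h =>
      rcases lex_append_cases a b t h with h' | h'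
      · exact Or.inl (List.Lex.cons h')
      · exact Or.inr (List.cons_prefix_cons.mpr ⟨rfl, h'⟩)
    | rel h => exact Or.inl (List.Lex.rel h)

private lemma lex_decomp {α : Type*} [LinearOrder α] {x y : List α}
    (h : List.Lex (· < ·) x y) :
    x <+: y ∨ ∃ p a b u v, x = p ++ a :: u ∧ y = p ++ b :: v ∧ a < b := by
  induction h with
  | nil => exact Or.inl List.nil_prefix
  | @rel a l₁ b l₂ hab => exact Or.inr ⟨[], a, b, l₁, l₂, rfl, rfl, hab⟩
  | @cons a l₁ l₂ h ih =>
    rcases ih with h' | ⟨p, c, d, u, v, rfl, rfl, hcd⟩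
    · exact Or.inl (List.cons_prefix_cons.mpr ⟨rfl, h'⟩)
    · exact Or.inr ⟨a :: p, c, d, u, v, rfl, rfl, hcd⟩

private lemma lex_prefix_cons {α : Type*} [LinearOrder α] (y : α) (c : List α) :
    ∀ p : List α, List.Lex (· < ·) p (p ++ y :: c)
  | [] => List.Lex.nil
  | _ :: p => List.Lex.cons (lex_prefix_cons y c p)

private lemma prefix_lex_or_eq {α : Type*} [LinearOrder α] {p u : List α} (h : p <+: u) :
    List.Lex (· < ·) p u ∨ p = u := by
  obtain ⟨c, rfl⟩ := h
  cases c with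
  | nil => right; simp
  | cons y c => left; exact lex_prefix_cons y c p

private lemma lex_take_of_lex {α : Type*} [LinearOrder α] {x v : List α} {n : ℕ}
    (h : List.Lex (· < ·) x v) (hn : x.length ≤ n) :
    List.Lex (· < ·) x (v.take n) ∨ x = v.take n := by
  rcases lex_decomp h with hp | ⟨p, a, b, u, w, rfl, rfl, hab⟩
  · have hx : x <+: v.take n := by
      rw [List.prefix_iff_eq_take, List.take_take, inf_eq_left.mpr hn]
      exact List.prefix_iff_eq_take.mp hp
    exact prefix_lex_or_eq hx
  · left
    have hpl : p.length < n := by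
      have : (p ++ a :: u).length = p.length + 1 + u.length := by simp; omega
      omega
    rw [List.take_append, List.take_of_length_le hpl.le]
    have h2 : n - p.length = (n - p.length - 1) + 1 := by omega
    rw [h2, List.take_succ_cons]
    exact List.Lex.append_left _ (List.Lex.rel hab) p

/-- the Lyndon prefix of `S_i` is exactly `S[i..nss[i])`:
it is a Lyndon word, and no longer prefix of `S_i` is a Lyndon word. -/
theorem stmt2 {α : Type*} [LinearOrder α] (S : List α) (hS : NullTerminated S)
    {i : ℕ} (hi : i < S.length) :
    IsLyndon (Ls S i) ∧
      ∀ k, nss S i - i < k → k ≤ S.length - i → ¬ IsLyndon ((S.drop i).take k) := by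
  have hmem : i < nss S i ∧ nss S i ≤ S.length ∧ Slt (S.drop (nss S i)) (S.drop i) := by
    apply Nat.sInf_mem (s := { j | i < j ∧ j ≤ S.length ∧ Slt (S.drop j) (S.drop i)})
    refine ⟨S.length, hi, le_refl _, ?_⟩
    rw [List.drop_length]
    cases hd : S.drop i with
    | nil =>
      have := congrArg List.length hd
      simp [List.length_drop] at this
      omega
    | cons a l => exact List.Lex.nil
  set m := nss S i with hm
  clear_value m
  obtain ⟨hm1, hm2, hm3⟩ := hmem
  have hm3' : List.Lex (· < ·) (S.drop m) (S.drop i) := hm3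
  have hmin : ∀ j, i < j → j < m → List.Lex (· < ·) (S.drop i) (S.drop j) := by
    intro j hij hjm
    have hns : j ∉ { j | i < j ∧ j ≤ S.length ∧ Slt (S.drop j) (S.drop i)} := by
      apply Nat.notMem_of_lt_sInf
      rw [← nss]
      omega
    have h1 : ¬ List.Lex (· < ·) (S.drop j) (S.drop i) := fun hs =>
      hns ⟨hij, le_trans hjm.le hm2, hs⟩
    have hne : S.drop i ≠ S.drop j := by
      intro he
      have := congrArg List.length he
      simp [List.length_drop] at this
      omega
    rcases lt_trichotomy (S.drop i) (S.drop j) with h | h | h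
    · exact h
    · exact absurd h hne
    · exact absurd h h1
  have key : ∀ p, i ≤ p → p ≤ m → (S.drop p).take (m - p) ++ S.drop m = S.drop p := by
    intro p hp1 hp2
    conv_rhs => rw [← List.take_append_drop (m - p) (S.drop p)]
    congr 1
    rw [List.drop_drop]
    congr 1
    omega
  have hLlen : (Ls S i).length = m - i := by
    simp only [Ls, ← hm, List.length_take, List.length_drop]
    omega
  constructor
  · constructor
    · intro h
      rw [h] at hLlen
      simp at hLlen
      omega
    · intro j' hj0 hjlen
      rw [hLlen] at hjlen
      set j := i + j' with hj
      have hij : i < j := by omega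
      have hjm : j < m := by omega
      have hb : (Ls S i).drop j' = (S.drop j).take (m - j) := by
        rw [Ls, ← hm, List.drop_take, List.drop_drop]
        congr 1
        omega
      show List.Lex (· < ·) (Ls S i) ((Ls S i).drop j')
      rw [hb]
      have hlex : List.Lex (· < ·)
          ((S.drop i).take (m - i) ++ S.drop m) ((S.drop j).take (m - j) ++ S.drop m) := by
        rw [key i le_rfl hm1.le, key j hij.le hjm.le]
        exact hmin j hij hjm
      rcases lex_append_cases _ _ _ hlex with h | h
      · rw [Ls, ← hm]; exact h
      · exfalso
        obtain ⟨c, hc⟩ := h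
        have hbl : ((S.drop j).take (m - j)).length = m - j := by
          simp [List.length_take, List.length_drop]
          omega
        set k := i + (m - j) with hk
        have hck : c ++ S.drop m = S.drop k := by
          have h5 : (S.drop j).take (m - j) ++ (c ++ S.drop m) = S.drop i := by
            rw [← List.append_assoc, hc, key i le_rfl hm1.le]
          have := congrArg (List.drop ((S.drop j).take (m - j)).length) h5
          rwa [List.drop_left, hbl, List.drop_drop] at this
        have hcl : List.Lex (· < ·) (S.drop k) (S.drop m) := by
          rw [← hck]
          apply lex_cancel_left ((S.drop j).take (m - j))
          rw [← List.append_assoc, hc]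
          exact hlex
        have hik : i < k := by omega
        have hkm : k < m := by omega
        have h8 : List.Lex (· < ·) (S.drop i) (S.drop k) := hmin k hik hkm
        exact asymm_of (List.Lex (· < ·)) (List.lex_trans lt_trans h8 hcl) hm3'
  · intro k hk1 hk2 hLy
    obtain ⟨hne, hlyn⟩ := hLy
    set w := (S.drop i).take k with hw
    clear_value w
    have hwlen : w.length = k := by
      simp [hw, List.length_take, List.length_drop]
      omega
    have hlt : Slt w (w.drop (m - i)) := hlyn (m - i) (by omega) (by omega)
    have hwd : w.drop (m - i) = (S.drop m).take (k - (m - i)) := by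
      rw [hw, List.drop_take, List.drop_drop]
      have h9 : i + (m - i) = m := by omega
      rw [h9]
    rw [hwd] at hlt
    have hlt' : List.Lex (· < ·) w ((S.drop m).take (k - (m - i))) := hlt
    have h1 : List.Lex (· < ·) ((S.drop m).take (k - (m - i))) (S.drop i) := by
      rcases prefix_lex_or_eq (List.take_prefix (k - (m - i)) (S.drop m)) with h | h
      · exact List.lex_trans lt_trans h hm3'
      · rw [h]; exact hm3'
    have h2 : ((S.drop m).take (k - (m - i))).length ≤ k := by
      simp only [List.length_take, List.length_drop]
      omega
    rw [hw] at hlt'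
    rcases lex_take_of_lex h1 h2 with h3 | h3
    · exact asymm_of (List.Lex (· < ·)) hlt' h3
    · rw [← h3] at hlt'
      exact irrefl_of (List.Lex (· < ·)) _ hlt'
end

section
/- For a null-terminated string S and index i ∈ [1, n), the set P_i = { j ∈ [0, i) : nss[j] = i } is empty if and only if S_{i-1} ≺ S_i; moreover if P_i is non-empty then i-1 ∈ P_i. -/
/-! If `S_{i-1} ≺ S_i`, then no `j < i` can have `nss[j] = i`: for `j = i - 1` this would
contradict `S_i ≺ S_{i-1}`, and for `j < i - 1` the suffix `S_{i-1}` would already be a smaller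
suffix than `S_j` closer to `j`. Otherwise `S_i ≺ S_{i-1}` (distinct lengths rule out equality), so
the nearest candidate `i` is the next smaller suffix of `i - 1`. -/

section NextSmallerSuffix

variable {α : Type*} [LinearOrder α] {S : List α}

theorem slt_drop_length {j : ℕ} (hj : j < S.length) : Slt (S.drop S.length) (S.drop j) := by
  rw [List.drop_length]
  obtain ⟨a, t, ht⟩ := List.ne_nil_iff_exists_cons.1 (by simpa using hj : S.drop j ≠ [])
  exact ht ▸ List.Lex.nil

theorem nss_mem {j : ℕ} (hj : j < S.length) :
    nss S j ∈ {k | j < k ∧ k ≤ S.length ∧ Slt (S.drop k) (S.drop j)} :=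
  Nat.sInf_mem ⟨_, hj, le_rfl, slt_drop_length hj⟩

theorem nss_le {j k : ℕ} (hjk : j < k) (hk : k ≤ S.length) (h : Slt (S.drop k) (S.drop j)) :
    nss S j ≤ k :=
  Nat.sInf_le ⟨hjk, hk, h⟩

theorem nss_pred_eq_iff {i : ℕ} (h1 : 1 ≤ i) (h2 : i ≤ S.length) :
    nss S (i - 1) = i ↔ Slt (S.drop i) (S.drop (i - 1)) := by
  obtain ⟨hlt, -, hslt⟩ := nss_mem (S := S) (j := i - 1) (by omega)
  refine ⟨fun h => by rwa [h] at hslt, fun h => ?_⟩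
  have := nss_le (by omega) h2 h
  omega

theorem slt_drop_of_not_slt_drop_pred {i : ℕ} (h1 : 1 ≤ i) (h2 : i ≤ S.length)
    (h : ¬ Slt (S.drop (i - 1)) (S.drop i)) : Slt (S.drop i) (S.drop (i - 1)) := by
  have hne : S.drop (i - 1) ≠ S.drop i := fun heq => by
    have := congrArg List.length heq
    simp only [List.length_drop] at this
    omega
  exact lt_of_le_of_ne (not_lt.1 h) hne.symm

theorem nss_ne_of_slt_drop_pred {i j : ℕ} (h2 : i ≤ S.length) (hji : j < i)
    (hlt : Slt (S.drop (i - 1)) (S.drop i)) : nss S j ≠ i := by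
  intro hnss
  have hdrop : S.drop i < S.drop j := hnss ▸ (nss_mem (S := S) (by omega)).2.2
  rcases (Nat.le_sub_one_of_lt hji).lt_or_eq with hj | rfl
  · have := nss_le (S := S) hj (by omega) (lt_trans hlt hdrop)
    omega
  · exact lt_asymm hlt hdrop

end NextSmallerSuffix

theorem stmt5_general {α : Type*} [LinearOrder α] (S : List α)
    {i : ℕ} (h1 : 1 ≤ i) (h2 : i < S.length) :
    ({j | j < i ∧ nss S j = i} = ∅ ↔ Slt (S.drop (i - 1)) (S.drop i)) ∧
      ({j | j < i ∧ nss S j = i}.Nonempty → i - 1 ∈ {j | j < i ∧ nss S j = i}) := by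
  have mem_of_not_slt (h : ¬ Slt (S.drop (i - 1)) (S.drop i)) :
      i - 1 ∈ {j | j < i ∧ nss S j = i} :=
    ⟨by omega, (nss_pred_eq_iff h1 h2.le).2 (slt_drop_of_not_slt_drop_pred h1 h2.le h)⟩
  have empty_of_slt (h : Slt (S.drop (i - 1)) (S.drop i)) : {j | j < i ∧ nss S j = i} = ∅ :=
    Set.eq_empty_of_forall_notMem fun _ hj => nss_ne_of_slt_drop_pred h2.le hj.1 h hj.2
  refine ⟨⟨fun hP => ?_, empty_of_slt⟩, fun hP => mem_of_not_slt fun h => ?_⟩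
  · by_contra h
    simpa [hP] using mem_of_not_slt h
  · exact hP.ne_empty (empty_of_slt h)

/-- for `1 ≤ i < n`, `P_i = {j < i : nss[j] = i}` is empty iff
`S_{i-1} ≺ S_i`; moreover, if `P_i` is non-empty then `i - 1 ∈ P_i`. -/
theorem stmt5 {α : Type*} [LinearOrder α] (S : List α) (hS : NullTerminated S)
    {i : ℕ} (h1 : 1 ≤ i) (h2 : i < S.length) :
    ({j | j < i ∧ nss S j = i} = ∅ ↔ Slt (S.drop (i - 1)) (S.drop i)) ∧
      ({j | j < i ∧ nss S j = i}.Nonempty → i - 1 ∈ {j | j < i ∧ nss S j = i}) :=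
  stmt5_general S h1 h2
end

section
/- If j < i-1 and S_j ≻ S_i (with nss[j] ≥ i implied) then there exists some k with j < k < i such that S_k ≺ S_j; hence no j < i-1 with S_{i-1} ≺ S_i can satisfy nss[j] = i. -/
/-- if `S_{i-1} ≺ S_i`, `j < i - 1` and `S_j ≻ S_i`, then some `k ∈ (j, i)`
has `S_k ≺ S_j`; hence no `j < i - 1` satisfies `nss[j] = i` when `S_{i-1} ≺ S_i`. -/
theorem stmt6 {α : Type*} [LinearOrder α] (S : List α) (hS : NullTerminated S)
    {i j : ℕ} (hji : j < i - 1) (hi : i < S.length)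
    (hpred : Slt (S.drop (i - 1)) (S.drop i))
    (hgt : Slt (S.drop i) (S.drop j)) :
    (∃ k, j < k ∧ k < i ∧ Slt (S.drop k) (S.drop j)) ∧ nss S j ≠ i := by
  have htrans : Slt (S.drop (i - 1)) (S.drop j) := by
    exact List.lex_trans (fun h₁ h₂ => lt_trans h₁ h₂) hpred hgt
  refine ⟨⟨i - 1, hji, by omega, htrans⟩, ?_⟩
  have hmem : i - 1 ∈ { k | j < k ∧ k ≤ S.length ∧ Slt (S.drop k) (S.drop j) } :=
    ⟨hji, by omega, htrans⟩
  have := Nat.sInf_le hmem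
  unfold nss
  omega
end

section
/- Let j < i and suppose j is not a leaf of the pss-tree, with last child j' (the maximal j' with pss[j'] = j). Then nss[j'] = i if and only if nss[j] = i. (Forward direction: if nss[j'] = i then nss[j] = i.) -/
section Stmt7Aux
variable {α : Type*} [LinearOrder α]

private lemma slt_trans' {a b c : List α} (h1 : Slt a b) (h2 : Slt b c) : Slt a c :=
  List.lex_trans (fun h1 h2 => lt_trans h1 h2) h1 h2

private lemma slt_irrefl' (a : List α) : ¬ Slt a a := irrefl_of (List.Lex (· < ·)) a

private lemma slt_total' {a b : List α} (h : a ≠ b) : Slt a b ∨ Slt b a := by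
  rcases (em (Slt a b)).elim Or.inl (fun h1 => (em (Slt b a)).elim (fun h2 => Or.inr (Or.inr h2))
      (fun h2 => Or.inr (Or.inl (Std.Trichotomous.trichotomous (r := List.Lex (α := α) (· < ·)) a b h1 h2)))) with h1 | h1 | h1
  · exact Or.inl h1
  · exact absurd h1 h
  · exact Or.inr h1

private lemma drop_ne' (S : List α) {i k : ℕ} (h : i < k) (hk : k ≤ S.length) :
    S.drop i ≠ S.drop k := by
  intro he
  have := congrArg List.length he
  simp [List.length_drop] at this
  omega

private lemma nss_mem' (S : List α) {i : ℕ} (hi : i < S.length) :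
    i < nss S i ∧ nss S i ≤ S.length ∧ Slt (S.drop (nss S i)) (S.drop i) := by
  have hne : { j | i < j ∧ j ≤ S.length ∧ Slt (S.drop j) (S.drop i) }.Nonempty := by
    refine ⟨S.length, hi, le_refl _, ?_⟩
    rw [List.drop_length]
    rcases List.lex_nil_or_eq_nil (r := ((· < ·) : α → α → Prop)) (S.drop i) with h | h
    · exact h
    · exfalso
      have := congrArg List.length h
      simp [List.length_drop] at this
      omega
  exact Nat.sInf_mem hne

private lemma nss_le' (S : List α) {i k : ℕ} (h1 : i < k) (h2 : k ≤ S.length)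
    (h3 : Slt (S.drop k) (S.drop i)) : nss S i ≤ k :=
  Nat.sInf_le ⟨h1, h2, h3⟩

private lemma nss_not_lt' (S : List α) {i k : ℕ} (h2 : k < nss S i) :
    ¬ (i < k ∧ k ≤ S.length ∧ Slt (S.drop k) (S.drop i)) :=
  Nat.notMem_of_lt_sInf h2

private lemma pss_bdd' (S : List α) (k : ℕ) :
    BddAbove (insert (-1) { j : ℤ | 0 ≤ j ∧ j < (k : ℤ) ∧ Slt (S.drop j.toNat) (S.drop k) }) := by
  refine ⟨(k : ℤ), ?_⟩
  rintro x hx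
  rcases Set.mem_insert_iff.mp hx with rfl | ⟨h0, h1, h2⟩
  · omega
  · omega

private lemma pss_spec' (S : List α) {j k : ℕ} (h : pss S k = (j : ℤ)) :
    j < k ∧ Slt (S.drop j) (S.drop k) := by
  have hmem := Int.csSup_mem (s := insert (-1)
      { m : ℤ | 0 ≤ m ∧ m < (k : ℤ) ∧ Slt (S.drop m.toNat) (S.drop k) })
    ⟨-1, Set.mem_insert _ _⟩ (pss_bdd' S k)
  rw [show sSup (insert (-1)
      { m : ℤ | 0 ≤ m ∧ m < (k : ℤ) ∧ Slt (S.drop m.toNat) (S.drop k) }) = pss S k from rfl,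
    h] at hmem
  rcases Set.mem_insert_iff.mp hmem with h1 | ⟨h0, h1, h2⟩
  · exact absurd h1 (by omega)
  · refine ⟨by omega, ?_⟩
    simpa using h2

private lemma pss_not_slt' (S : List α) {j k m : ℕ} (h : pss S k = (j : ℤ))
    (h1 : j < m) (h2 : m < k) : ¬ Slt (S.drop m) (S.drop k) := by
  intro hs
  have hle : (m : ℤ) ≤ pss S k :=
    le_csSup (pss_bdd' S k) (Set.mem_insert_of_mem _ ⟨by omega, by omega, by simpa using hs⟩)
  rw [h] at hle
  omega

private lemma pss_eq' (S : List α) {j k : ℕ} (hjk : j < k) (hs : Slt (S.drop j) (S.drop k))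
    (hmax : ∀ m, j < m → m < k → ¬ Slt (S.drop m) (S.drop k)) : pss S k = (j : ℤ) := by
  unfold pss
  apply le_antisymm
  · apply csSup_le ⟨-1, Set.mem_insert _ _⟩
    rintro x hx
    rcases Set.mem_insert_iff.mp hx with rfl | ⟨h0, h1, h2⟩
    · omega
    · by_contra hgt
      push_neg at hgt
      exact hmax x.toNat (by omega) (by omega) h2
  · exact le_csSup (pss_bdd' S k)
      (Set.mem_insert_of_mem _ ⟨by omega, by omega, by simpa using hs⟩)

end Stmt7Aux

/-- for `j < i`, if `j'` is the last child of `j` in the `pss`-tree,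
then `nss[j'] = i ↔ nss[j] = i`. -/
theorem stmt7 {α : Type*} [LinearOrder α] (S : List α) (hS : NullTerminated S)
    {i j j' : ℕ} (hji : j < i) (hi : i ≤ S.length) (hj' : j' < S.length)
    (hchild : pss S j' = (j : ℤ))
    (hlast : ∀ k, k < S.length → j' < k → pss S k ≠ (j : ℤ)) :
    nss S j' = i ↔ nss S j = i := by
  obtain ⟨hjj', hsjj'⟩ := pss_spec' S hchild
  have hjn : j < S.length := lt_of_lt_of_le hji hi
  -- any position t with j < t < nss S j' cannot have a suffix smaller than suffix j'
  have keyJ' : ∀ t, j < t → t < nss S j' → t ≤ S.length → ¬ Slt (S.drop t) (S.drop j') := by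
    intro t h1 h2 h3 hs
    rcases lt_trichotomy t j' with h | rfl | h
    · exact pss_not_slt' S hchild h1 h hs
    · exact slt_irrefl' _ hs
    · exact nss_not_lt' S h2 ⟨h, h3, hs⟩
  constructor
  · -- forward: nss S j' = i → nss S j = i
    intro h
    obtain ⟨hj'i, _, hsij'⟩ := nss_mem' S hj'
    rw [h] at hj'i hsij'
    -- first show Slt (S.drop i) (S.drop j)
    have hsij : Slt (S.drop i) (S.drop j) := by
      rcases slt_total' (Ne.symm (drop_ne' S hji hi)) with hgood | hbad
      · exact hgood
      · -- hbad : Slt (S.drop j) (S.drop i); then pss S i = j, contradicting hlast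
        exfalso
        have hin : i < S.length := by
          by_contra hn
          have : i = S.length := by omega
          rw [this, List.drop_length] at hbad
          exact absurd hbad (by unfold Slt; generalize S.drop j = l; rintro ⟨⟩)
        refine hlast i hin hj'i (pss_eq' S hji hbad ?_)
        intro m hm1 hm2 hs
        exact keyJ' m hm1 (by omega) (by omega) (slt_trans' hs hsij')
    have hle : nss S j ≤ i := nss_le' S hji hi hsij
    have hge : i ≤ nss S j := by
      by_contra hlt
      push_neg at hlt
      obtain ⟨hm1, hm2, hm3⟩ := nss_mem' S hjn
      exact keyJ' (nss S j) hm1 (by omega) hm2 (slt_trans' hm3 hsjj')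
    omega
  · -- backward: nss S j = i → nss S j' = i
    intro h
    obtain ⟨_, _, hsij⟩ := nss_mem' S hjn
    rw [h] at hsij
    have hsij'2 : Slt (S.drop i) (S.drop j') := slt_trans' hsij hsjj'
    have hj'i : j' < i := by
      rcases lt_trichotomy i j' with hc | rfl | hc
      · exact absurd hsij'2 (pss_not_slt' S hchild hji hc)
      · exact absurd hsij'2 (slt_irrefl' _)
      · exact hc
    have hle : nss S j' ≤ i := nss_le' S hj'i hi hsij'2
    have hge : i ≤ nss S j' := by
      by_contra hlt
      push_neg at hlt
      obtain ⟨hm1, hm2, hm3⟩ := nss_mem' S hj'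
      set m := nss S j' with hm
      have hmn : m < S.length := by omega
      refine hlast m hmn hm1 (pss_eq' S (by omega) ?_ ?_)
      · -- Slt (S.drop j) (S.drop m)
        rcases slt_total' (drop_ne' S (show j < m by omega) hm2) with hgood | hbad
        · exact hgood
        · exact absurd ⟨show j < m by omega, hm2, hbad⟩
            (nss_not_lt' S (show m < nss S j by omega))
      · intro t ht1 ht2 hs
        exact keyJ' t ht1 (by omega) (by omega) (slt_trans' hs hm3)
    omega
end

section
/- If j is a leaf of the pss-tree (no index k has pss[k] = j) and j < n-1, then nss[j] = j+1. -/
/-- if `j < n - 1` is a leaf of the `pss`-tree, then `nss[j] = j + 1`. -/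
theorem stmt9 {α : Type*} [LinearOrder α] (S : List α) (hS : NullTerminated S)
    {j : ℕ} (hj : j < S.length - 1)
    (hleaf : ∀ k, k < S.length → pss S k ≠ (j : ℤ)) :
    nss S j = j + 1 := by
  have hj1 : j + 1 < S.length := by omega
  -- key: Slt (drop (j+1)) (drop j)
  have hkey : Slt (S.drop (j+1)) (S.drop j) := by
    by_contra hcon
    have hne : S.drop (j+1) ≠ S.drop j := by
      intro h
      have := congrArg List.length h
      simp [List.length_drop] at this
      omega
    have htri := trichotomous_of (List.Lex ((· < ·) : α → α → Prop)) (S.drop (j+1)) (S.drop j)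
    rcases htri with h | h | h
    · exact hcon h
    · exact hne h
    · -- drop j ≺ drop (j+1), so pss (j+1) = j
      have hmem : (j : ℤ) ∈ insert (-1 : ℤ)
          { m : ℤ | 0 ≤ m ∧ m < ((j+1 : ℕ) : ℤ) ∧ Slt (S.drop m.toNat) (S.drop (j+1)) } := by
        right
        refine ⟨Int.ofNat_nonneg j, by push_cast; omega, ?_⟩
        simpa [Slt] using h
      have hbdd : ∀ x ∈ insert (-1 : ℤ)
          { m : ℤ | 0 ≤ m ∧ m < ((j+1 : ℕ) : ℤ) ∧ Slt (S.drop m.toNat) (S.drop (j+1)) },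
          x ≤ (j : ℤ) := by
        rintro x (rfl | ⟨h0, h1, _⟩)
        · omega
        · push_cast at h1; omega
      have : pss S (j+1) = (j : ℤ) := by
        unfold pss
        refine le_antisymm (csSup_le ⟨_, hmem⟩ hbdd) (le_csSup ⟨(j : ℤ), hbdd⟩ hmem)
      exact hleaf (j+1) hj1 this
  have hmem : j + 1 ∈ { m | j < m ∧ m ≤ S.length ∧ Slt (S.drop m) (S.drop j) } :=
    ⟨by omega, by omega, hkey⟩
  have h1 : nss S j ≤ j + 1 := Nat.sInf_le hmem
  have h2 : j < nss S j := (Nat.sInf_mem ⟨j+1, hmem⟩).1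
  omega
end

section
/- Let w, u, v be strings over a totally ordered alphabet such that u ≺ wu and v ≻ wv (lexicographically). Then wu ≺ wv. -/
theorem slt_append_left {α : Type*} [LinearOrder α] (w : List α) {u v : List α}
    (h : Slt u v) : Slt (w ++ u) (w ++ v) := by
  induction w with
  | nil => exact h
  | cons a w ih => exact List.Lex.cons ih

theorem slt_key {α : Type*} [LinearOrder α] :
    ∀ (n : ℕ) (u v w : List α), u.length + v.length ≤ n →
      Slt u (w ++ u) → Slt (w ++ v) v → Slt u v := by
  intro n
  induction n with
  | zero =>
    intro u v w hn hu hv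
    have hv0 : v = [] := List.eq_nil_of_length_eq_zero (by omega)
    subst hv0
    rw [List.append_nil] at hv
    cases hv
  | succ n ih =>
    intro u v w hn hu hv
    match w with
    | [] => exact absurd hu (irrefl_of (List.Lex (· < ·)) u)
    | a :: w' =>
      match v with
      | [] => exact absurd hv (by intro h; cases h)
      | c :: v' =>
        match u with
        | [] => exact List.Lex.nil
        | b :: u' =>
          cases hu with
          | rel hba =>
            cases hv with
            | rel hac => exact List.Lex.rel (lt_trans hba hac)
            | cons _ => exact List.Lex.rel hba
          | cons hu' =>
            cases hv with
            | rel hac => exact List.Lex.rel hac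
            | cons hv' =>
              apply List.Lex.cons
              apply ih u' v' (w' ++ [a])
              · simp at hn ⊢; omega
              · simpa [Slt] using (hu' : List.Lex (· < ·) u' (w' ++ a :: u'))
              · simpa [Slt] using (hv' : List.Lex (· < ·) (w' ++ a :: v') v')

/-- if `u ≺ wu` and `v ≻ wv`, then `wu ≺ wv`. -/
theorem stmt12 {α : Type*} [LinearOrder α] (w u v : List α)
    (hu : Slt u (w ++ u)) (hv : Slt (w ++ v) v) :
    Slt (w ++ u) (w ++ v) := by
  exact slt_append_left w (slt_key (u.length + v.length) u v w le_rfl hu hv)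
end

section
/- If v ≻ wv lexicographically, then v is not a power of w and wv is not of the form w^j for any j ≥ 1; moreover there exist k ≥ 1, 0 ≤ ℓ < |w|, a character b > w[ℓ] and a string m such that wv = w^k · w[0..ℓ) · b · m. -/
/-- `wpow w k` is the `k`-fold concatenation `w^k`. -/
def wpow {α : Type*} (w : List α) : ℕ → List α
  | 0 => []
  | k + 1 => w ++ wpow w k

set_option linter.unusedSectionVars false
namespace Aux
variable {α : Type*} [LinearOrder α]

lemma lex_append_left_iff (p u v : List α) :
    List.Lex (· < ·) (p ++ u) (p ++ v) ↔ List.Lex (· < ·) u v := by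
  induction p with
  | nil => rfl
  | cons a p ih => simpa [List.lex_cons_iff] using ih

lemma not_lex_append (l t : List α) : ¬ List.Lex (· < ·) (l ++ t) l := by
  induction l with
  | nil => exact List.not_lex_nil
  | cons a l ih => rw [List.cons_append, List.lex_cons_iff]; exact ih

lemma lex_decomp {u v : List α} (h : List.Lex (· < ·) u v) :
    (∃ t, t ≠ [] ∧ v = u ++ t) ∨
    ∃ (p s t : List α) (a b : α), a < b ∧ u = p ++ a :: s ∧ v = p ++ b :: t := by
  induction h with
  | nil => exact Or.inl ⟨_, by simp, rfl⟩
  | @cons a l₁ l₂ h ih =>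
      rcases ih with ⟨t, ht, rfl⟩ | ⟨p, s, t, x, y, hxy, rfl, rfl⟩
      · exact Or.inl ⟨t, ht, rfl⟩
      · exact Or.inr ⟨a :: p, s, t, x, y, hxy, rfl, rfl⟩
  | @rel a l₁ b l₂ hab => exact Or.inr ⟨[], l₁, l₂, a, b, hab, rfl, rfl⟩

lemma wpow_succ' (w : List α) (k : ℕ) : wpow w (k + 1) = wpow w k ++ w := by
  induction k with
  | zero => simp [wpow]
  | succ k ih =>
      show w ++ wpow w (k + 1) = wpow w (k + 1) ++ w
      rw [ih, ← List.append_assoc, show w ++ wpow w k = wpow w k ++ w from ih]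

lemma key (w : List α) (hw : w ≠ []) : ∀ (v : List α), Slt (w ++ v) v →
    ∃ (k ℓ : ℕ) (b : α) (m : List α), 1 ≤ k ∧ ∃ hℓ : ℓ < w.length,
      w[ℓ]'hℓ < b ∧ w ++ v = wpow w k ++ w.take ℓ ++ b :: m := by
  suffices H : ∀ (n : ℕ) (v : List α), v.length ≤ n → Slt (w ++ v) v →
      ∃ (k ℓ : ℕ) (b : α) (m : List α), 1 ≤ k ∧ ∃ hℓ : ℓ < w.length,
        w[ℓ]'hℓ < b ∧ w ++ v = wpow w k ++ w.take ℓ ++ b :: m by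
    exact fun v => H v.length v le_rfl
  intro n
  induction n with
  | zero =>
      intro v hlen hv
      have : v = [] := List.length_eq_zero_iff.mp (Nat.le_zero.mp hlen)
      subst this
      exact absurd hv (List.not_lex_nil)
  | succ n ih =>
  intro v hlen hv
  rcases lex_decomp hv with ⟨t, ht, heq⟩ | ⟨p, s, t, a, b, hab, hu, hveq⟩
  · -- v = (w ++ v) ++ t : length contradiction
    exfalso
    have hL := congrArg List.length heq
    have hw1 : 0 < w.length := List.length_pos_iff.mpr hw
    simp [List.length_append] at hL
    omega
  · by_cases hp : p.length < w.length
    · -- mismatch inside w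
      have hpw : p = w.take p.length := by
        have : (w ++ v).take p.length = p := by rw [hu]; simp
        rw [List.take_append_of_le_length (by omega)] at this
        exact this.symm
      have ha : a = w[p.length]'hp := by
        have h2 := List.getElem_of_eq hu (i := p.length) (by simp; omega)
        rw [List.getElem_append_left hp, List.getElem_append_right (le_refl _)] at h2
        simp at h2
        exact h2.symm
      refine ⟨1, p.length, b, t, le_refl 1, hp, ha ▸ hab, ?_⟩
      rw [show wpow w 1 = w ++ [] from by simp [wpow], ← hpw]
      simp [hveq]
    · -- w is a prefix of p, hence of v
      push_neg at hp
      have hwp : w = p.take w.length := by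
        have : (w ++ v).take w.length = w := by simp
        rw [hu, List.take_append_of_le_length hp] at this
        exact this.symm
      -- v = w ++ v' with v' := v.drop w.length
      have hwv : w <+: v := by
        rw [hveq, hwp]
        exact (List.take_prefix _ _).trans (List.prefix_append _ _)
      obtain ⟨v', rfl⟩ := hwv
      have hlt : Slt (w ++ v') v' := by
        have := hv
        unfold Slt at this ⊢
        rwa [show w ++ (w ++ v') = w ++ (w ++ v') from rfl, lex_append_left_iff] at this
      obtain ⟨k, ℓ, b', m, hk, hℓ, hb, heq'⟩ := ih v' (by
        have hw1 : 1 ≤ w.length := by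
          cases w with
          | nil => exact absurd rfl hw
          | cons x xs => simp
        have : (w ++ v').length ≤ n + 1 := hlen
        simp [List.length_append] at this
        omega) hlt
      exact ⟨k + 1, ℓ, b', m, by omega, hℓ, hb, by
        show w ++ (w ++ v') = (w ++ wpow w k) ++ w.take ℓ ++ b' :: m
        rw [heq']
        simp [List.append_assoc]⟩

end Aux

/-- if `v ≻ wv`, then `v` is not a power of `w`, `wv` is not `w^j` for any
`j ≥ 1`, and `wv = w^k · w[0..ℓ) · b · m` for some `k ≥ 1`, `ℓ < |w|`, `b > w[ℓ]`, `m`. -/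
theorem stmt13 {α : Type*} [LinearOrder α] (w v : List α) (hw : w ≠ [])
    (hv : Slt (w ++ v) v) :
    (∀ j : ℕ, v ≠ wpow w j) ∧
    (∀ j : ℕ, 1 ≤ j → w ++ v ≠ wpow w j) ∧
    (∃ (k ℓ : ℕ) (b : α) (m : List α), 1 ≤ k ∧ ∃ hℓ : ℓ < w.length,
      w[ℓ]'hℓ < b ∧ w ++ v = wpow w k ++ w.take ℓ ++ b :: m) := by
  have h1 : ∀ j : ℕ, v ≠ wpow w j := by
    intro j hj
    subst hj
    have : Slt (wpow w j ++ w) (wpow w j) := by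
      have : w ++ wpow w j = wpow w j ++ w := Aux.wpow_succ' w j
      rwa [this] at hv
    exact Aux.not_lex_append _ _ this
  refine ⟨h1, ?_, Aux.key w hw v hv⟩
  intro j hj heq
  obtain ⟨j', rfl⟩ : ∃ j', j = j' + 1 := ⟨j - 1, by omega⟩
  have : v = wpow w j' := List.append_cancel_left (heq.trans rfl)
  exact h1 j' this
end

section
/- Let α be a Lyndon word and let i, j be indices of a null-terminated string S such that both S_i and S_j have α as a prefix. If the Lyndon prefix of S_i equals α but the Lyndon prefix of S_j is strictly longer than α, then S_i ≺ S_j. -/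
lemma key_lem {α : Type*} [LinearOrder α] : ∀ (u v w : List α), w ≠ [] →
    List.Lex (· < ·) u (w ++ u) → List.Lex (· < ·) (w ++ v) v → List.Lex (· < ·) u v := by
  intro u
  induction u with
  | nil =>
    intro v w hw _ hv
    cases v with
    | nil => exact absurd hv List.not_lex_nil
    | cons y v' => exact List.Lex.nil
  | cons x u' ih =>
    intro v w hw hu hv
    cases v with
    | nil => exact absurd hv List.not_lex_nil
    | cons y v' =>
      cases w with
      | nil => exact absurd rfl hw
      | cons c w' =>
        simp only [List.cons_append] at hu hv
        cases hu with
        | rel h1 =>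
          cases hv with
          | rel h2 => exact List.Lex.rel (lt_trans h1 h2)
          | cons h2 => exact List.Lex.rel h1
        | cons h1 =>
          cases hv with
          | rel h2 => exact List.Lex.rel h2
          | cons h2 =>
            rw [List.append_cons w' _ u'] at h1
            rw [List.append_cons w' _ v'] at h2
            exact List.Lex.cons (ih v' _ (by simp) h1 h2)

lemma len_mem_set {α : Type*} [LinearOrder α] (S : List α) {i : ℕ} (hi : i < S.length) :
    S.length ∈ { j | i < j ∧ j ≤ S.length ∧ Slt (S.drop j) (S.drop i) } := by
  refine ⟨hi, le_refl _, ?_⟩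
  rw [List.drop_length]
  have : S.drop i ≠ [] := by
    simp [List.drop_eq_nil_iff]; omega
  obtain ⟨y, t, h⟩ := List.exists_cons_of_ne_nil this
  rw [h]; exact List.Lex.nil


/-- if `a` is a Lyndon word which is a prefix of both `S_i` and `S_j`,
`Ls_i = a`, and `Ls_j` is strictly longer than `a`, then `S_i ≺ S_j`. -/
theorem stmt14 {α : Type*} [LinearOrder α] (S : List α) (hS : NullTerminated S)
    {i j : ℕ} (hi : i < S.length) (hj : j < S.length) {a : List α}
    (ha : IsLyndon a) (hpi : a <+: S.drop i) (hpj : a <+: S.drop j)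
    (hLi : Ls S i = a) (hLj : a.length < (Ls S j).length) :
    Slt (S.drop i) (S.drop j) := by
  have ha0 : 0 < a.length := List.length_pos_iff.mpr ha.1
  -- properties of nss at i
  have hnei : { k | i < k ∧ k ≤ S.length ∧ Slt (S.drop k) (S.drop i) }.Nonempty :=
    ⟨S.length, len_mem_set S hi⟩
  have hmemi : i < nss S i ∧ nss S i ≤ S.length ∧ Slt (S.drop (nss S i)) (S.drop i) :=
    Nat.sInf_mem hnei
  have hlei : nss S i ≤ S.length := Nat.sInf_le (len_mem_set S hi)
  -- length of Ls S i
  have hLilen : min (nss S i - i) (S.length - i) = a.length := by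
    have := congrArg List.length hLi
    simpa [Ls] using this
  have hnssi : nss S i = i + a.length := by
    have hgt : i < nss S i := hmemi.1
    omega
  -- properties of nss at j
  have hnej : { k | j < k ∧ k ≤ S.length ∧ Slt (S.drop k) (S.drop j) }.Nonempty :=
    ⟨S.length, len_mem_set S hj⟩
  have hLjlen : a.length < min (nss S j - j) (S.length - j) := by
    simpa [Ls] using hLj
  have hja : j + a.length < nss S j := by omega
  have hnotmem : j + a.length ∉ { k | j < k ∧ k ≤ S.length ∧ Slt (S.drop k) (S.drop j) } :=
    Nat.notMem_of_lt_sInf hja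
  have hnlt : ¬ Slt (S.drop (j + a.length)) (S.drop j) := by
    intro h
    exact hnotmem ⟨by omega, by omega, h⟩
  -- decompositions
  obtain ⟨ti, hti⟩ := hpi
  obtain ⟨tj, htj⟩ := hpj
  have di : S.drop (i + a.length) = ti := by
    rw [← List.drop_drop, ← hti, List.drop_left]
  have dj : S.drop (j + a.length) = tj := by
    rw [← List.drop_drop, ← htj, List.drop_left]
  -- Slt ti (a ++ ti)
  have h1 : Slt ti (a ++ ti) := by
    have := hmemi.2.2
    rwa [hnssi, di, ← hti] at this
  -- Slt (a ++ tj) tj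
  have h2 : Slt (a ++ tj) tj := by
    have hne2 : S.drop j ≠ S.drop (j + a.length) := by
      intro h
      have := congrArg List.length h
      simp only [List.length_drop] at this
      omega
    rcases trichotomous_of (List.Lex (· < ·)) (S.drop j) (S.drop (j + a.length)) with h | h | h
    · rwa [dj, ← htj] at h
    · exact absurd h hne2
    · exact absurd h hnlt
  have := key_lem ti tj a ha.1 h1 h2
  rw [← hti, ← htj]
  exact List.Lex.append_left _ this a
end

section
/- For indices i and j of a null-terminated string S sharing a common Lyndon prefix α (Ls_i = Ls_j = α), we have S_i ≺ S_j if and only if S_{i+|α|} ≺ S_{j+|α|}. -/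
theorem List.lex_append_left_iff {α : Type*} {r : α → α → Prop} [Std.Irrefl r]
    (s : List α) {t₁ t₂ : List α} : List.Lex r (s ++ t₁) (s ++ t₂) ↔ List.Lex r t₁ t₂ := by
  induction s with
  | nil => rfl
  | cons x s ih => simpa only [List.cons_append, List.lex_cons_iff] using ih

theorem drop_eq_Ls_append {α : Type*} [LinearOrder α] (S : List α) (i : ℕ) :
    S.drop i = Ls S i ++ S.drop (i + (Ls S i).length) := by
  rw [← List.drop_drop]
  exact (List.prefix_iff_eq_append.mp (List.take_prefix _ _)).symm

theorem stmt15_general {α : Type*} [LinearOrder α] (S : List α)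
    {i j : ℕ} {a : List α}
    (hLi : Ls S i = a) (hLj : Ls S j = a) :
    (Slt (S.drop i) (S.drop j) ↔ Slt (S.drop (i + a.length)) (S.drop (j + a.length))) := by
  rw [Slt, Slt, drop_eq_Ls_append S i, drop_eq_Ls_append S j, hLi, hLj,
    List.lex_append_left_iff]

/-- if `S_i` and `S_j` share the Lyndon prefix `a`, then
`S_i ≺ S_j ↔ S_{i+|a|} ≺ S_{j+|a|}`. -/
theorem stmt15 {α : Type*} [LinearOrder α] (S : List α) (hS : NullTerminated S)
    {i j : ℕ} (hi : i < S.length) (hj : j < S.length) {a : List α}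
    (hLi : Ls S i = a) (hLj : Ls S j = a) :
    (Slt (S.drop i) (S.drop j) ↔ Slt (S.drop (i + a.length)) (S.drop (j + a.length))) :=
  stmt15_general S hLi hLj
end

section
/- If pss[j'] = j (j is the previous smaller suffix of j'), then nss[j] > j'. -/
private lemma slt_trans {α : Type*} [LinearOrder α] {u v w : List α}
    (h1 : Slt u v) (h2 : Slt v w) : Slt u w :=
  (List.lt_iff_lex_lt _ _).mp (show u < w from lt_trans (show u < v from (List.lt_iff_lex_lt _ _).mpr h1) (show v < w from (List.lt_iff_lex_lt _ _).mpr h2))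

private lemma slt_asymm {α : Type*} [LinearOrder α] {u v : List α}
    (h1 : Slt u v) (h2 : Slt v u) : False :=
  asymm (r := List.Lex (· < ·)) h1 h2

private lemma slt_total {α : Type*} [LinearOrder α] {u v : List α}
    (h : ¬ Slt u v) : u = v ∨ Slt v u := by
  haveI : IsTrichotomous α (· < ·) := ⟨fun a b h1 h2 => le_antisymm (not_lt.mp h2) (not_lt.mp h1)⟩
  rcases trichotomous_of (List.Lex (· < ·)) u v with h1 | h1 | h1
  · exact absurd h1 h
  · exact Or.inl h1
  · exact Or.inr h1

/-- if `pss[j'] = j`, then `nss[j] > j'`. -/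
theorem stmt18 {α : Type*} [LinearOrder α] (S : List α) (hS : NullTerminated S)
    {j j' : ℕ} (hj' : j' < S.length) (hp : pss S j' = (j : ℤ)) :
    j' < nss S j := by
  set T : Set ℤ := { m : ℤ | 0 ≤ m ∧ m < (j' : ℤ) ∧ Slt (S.drop m.toNat) (S.drop j') } with hT
  have hbdd : BddAbove (insert (-1 : ℤ) T) := by
    refine ⟨(j' : ℤ), ?_⟩
    rintro m (rfl | hm)
    · omega
    · exact hm.2.1.le
  have hmem : pss S j' ∈ insert (-1 : ℤ) T :=
    Int.csSup_mem ⟨-1, Set.mem_insert _ _⟩ hbdd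
  rw [hp] at hmem
  rcases hmem with h | hjT
  · omega
  have hjj' : j < j' := by exact_mod_cast hjT.2.1
  have hjlt : Slt (S.drop j) (S.drop j') := by
    simpa using hjT.2.2
  have hmax : ∀ m : ℤ, m ∈ T → m ≤ (j : ℤ) := by
    intro m hm
    have h := le_csSup hbdd (Set.mem_insert_of_mem _ hm)
    exact le_of_le_of_eq h hp
  -- the nss set is nonempty
  set N : Set ℕ := { k | j < k ∧ k ≤ S.length ∧ Slt (S.drop k) (S.drop j) } with hN
  have hdropj : S.drop j ≠ [] := by
    intro h
    have := List.length_drop (i := j) (l := S)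
    rw [h] at this
    simp at this
    omega
  have hlenN : S.length ∈ N := by
    refine ⟨by omega, le_rfl, ?_⟩
    rw [List.drop_length]
    cases hsj : S.drop j with
    | nil => exact absurd hsj hdropj
    | cons a l => exact List.Lex.nil
  have hnssmem : nss S j ∈ N := Nat.sInf_mem ⟨_, hlenN⟩
  by_contra hcon
  push_neg at hcon
  obtain ⟨hjk, hklen, hkslt⟩ := hnssmem
  set k := nss S j
  rcases eq_or_lt_of_le hcon with heq | hlt
  · rw [heq] at hkslt
    exact slt_asymm hjlt hkslt
  · -- j < k < j'
    have hknotT : ¬ Slt (S.drop k) (S.drop j') := by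
      intro hs
      have : (k : ℤ) ∈ T := ⟨by positivity, by exact_mod_cast hlt, by simpa using hs⟩
      have := hmax _ this
      omega
    rcases slt_total hknotT with heq2 | hlt2
    · rw [heq2] at hkslt
      exact slt_asymm hjlt hkslt
    · exact slt_asymm (slt_trans hlt2 hkslt) hjlt
end
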